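/- With the setup of the quantum geometric tensor Q_{ab} = ⟨∂_a Λ, D_x² ∂_b Λ⟩ = γ_{ab} + i S_{ab}, the antisymmetric part satisfies S_{ab} = ε_{ijk} n^k (∂x^i/∂s^a)(∂x^j/∂s^b), where n^k = ⟨Λ, (σ_k ⊗ id)Λ⟩. If t₁, t₂ are the coordinate tangent vectors at x and they are orthonormal, then S₁₂ = n · (t₁ × t₂) and, since n is parallel to t₁ × t₂, S₁₂ = ±‖n‖. -/

import Mathlib

open Matrix

noncomputable section

def pauli : Fin 3 → Matrix (Fin 2) (Fin 2) ℂ :=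
  ![!![0, 1; 1, 0], !![0, -Complex.I; Complex.I, 0], !![1, 0; 0, -1]]

/-- The real Levi-Civita symbol ε_{ijk}. -/
def epsR (i j k : Fin 3) : ℝ :=
  if (i, j, k) = ((0 : Fin 3), (1 : Fin 3), (2 : Fin 3)) ∨
      (i, j, k) = ((1 : Fin 3), (2 : Fin 3), (0 : Fin 3)) ∨
      (i, j, k) = ((2 : Fin 3), (0 : Fin 3), (1 : Fin 3)) then 1
  else if (i, j, k) = ((2 : Fin 3), (1 : Fin 3), (0 : Fin 3)) ∨
      (i, j, k) = ((1 : Fin 3), (0 : Fin 3), (2 : Fin 3)) ∨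
      (i, j, k) = ((0 : Fin 3), (2 : Fin 3), (1 : Fin 3)) then -1
  else 0

/-- Cross product of vectors in ℝ³. -/
def cross (u v : Fin 3 → ℝ) : Fin 3 → ℝ :=
  ![u 1 * v 2 - u 2 * v 1, u 2 * v 0 - u 0 * v 2, u 0 * v 1 - u 1 * v 0]

variable {H : Type*} [NormedAddCommGroup H] [InnerProductSpace ℂ H] [CompleteSpace H]

def kron (σ : Matrix (Fin 2) (Fin 2) ℂ) (T : H →L[ℂ] H) :
    Matrix (Fin 2) (Fin 2) (H →L[ℂ] H) :=
  Matrix.of fun j k => σ j k • T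

def mapp (M : Matrix (Fin 2) (Fin 2) (H →L[ℂ] H)) (v : PiLp 2 fun _ : Fin 2 => H) :
    PiLp 2 fun _ : Fin 2 => H :=
  WithLp.toLp 2 (fun j => ∑ k, M j k (v k))

/-!
Differentiating the kernel equation `D_{x(s)} Λ(s) = 0` along `s^a` gives
`D ∂ₐΛ = ∂ₐxⁱ (σᵢ ⊗ 1) Λ`. Since `D` is symmetric,
`Q_ab = ⟨D ∂ₐΛ, D ∂_bΛ⟩ = ∂ₐxⁱ ∂_bxʲ ⟨Λ, (σᵢσⱼ ⊗ 1) Λ⟩`, and the Pauli relation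
`σᵢσⱼ = δᵢⱼ + i εᵢⱼₖ σₖ` leaves `εᵢⱼₖ nᵏ ∂ₐxⁱ ∂_bxʲ` as imaginary part, the diagonal term
`⟨Λ, Λ⟩` being real. For orthonormal `t₁, t₂`, Lagrange's identity makes `t₁ × t₂` a unit vector,
so `n = μ (t₁ × t₂)` gives `S₁₂ = μ` and `‖n‖ = |μ|`.
-/

open scoped InnerProductSpace

theorem pauli_isHermitian (i : Fin 3) : (pauli i).IsHermitian := by
  fin_cases i <;> ext a b <;> fin_cases a <;> fin_cases b <;> simp [pauli]

theorem pauli_mul_pauli (i j : Fin 3) :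
    pauli i * pauli j = (if i = j then 1 else 0) + Complex.I • ∑ k, (epsR i j k : ℂ) • pauli k := by
  fin_cases i <;> fin_cases j <;> ext a b <;> fin_cases a <;> fin_cases b <;>
    simp [pauli, epsR, Matrix.mul_apply, Fin.sum_univ_two]

section

variable {V : Type*} [NormedAddCommGroup V] [InnerProductSpace ℂ V]

local notation "E" => PiLp 2 fun _ : Fin 2 => V

def mappL (M : Matrix (Fin 2) (Fin 2) (V →L[ℂ] V)) : E →L[ℂ] E :=
  (PiLp.continuousLinearEquiv 2 ℂ _).symm.toContinuousLinearMap ∘L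
    ContinuousLinearMap.pi (fun j => ∑ k, M j k ∘L ContinuousLinearMap.proj k) ∘L
    (PiLp.continuousLinearEquiv 2 ℂ _).toContinuousLinearMap

theorem coe_mappL (M : Matrix (Fin 2) (Fin 2) (V →L[ℂ] V)) : ⇑(mappL M) = mapp M := by
  ext v j
  simp [mappL, mapp]

theorem mapp_mul (M N : Matrix (Fin 2) (Fin 2) (V →L[ℂ] V)) (v : E) :
    mapp (M * N) v = mapp M (mapp N v) := by
  ext j
  simp only [mapp, PiLp.toLp_apply, Matrix.mul_apply, _root_.sum_apply, mul_apply_eq_comp, map_sum]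
  exact Finset.sum_comm

theorem mapp_sum {ι : Type*} (s : Finset ι) (M : ι → Matrix (Fin 2) (Fin 2) (V →L[ℂ] V)) (v : E) :
    mapp (∑ i ∈ s, M i) v = ∑ i ∈ s, mapp (M i) v := by
  ext j
  simp only [mapp, Matrix.sum_apply, _root_.sum_apply, PiLp.toLp_apply, WithLp.ofLp_sum,
    Finset.sum_apply]
  exact Finset.sum_comm

theorem mapp_kron_sub_smul_one {ι : Type*} [Fintype ι] (σ : ι → Matrix (Fin 2) (Fin 2) ℂ)
    (X : ι → V →L[ℂ] V) (c : ι → ℂ) (v : E) :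
    mapp (∑ i, kron (σ i) (X i - c i • 1)) v
      = mapp (∑ i, kron (σ i) (X i)) v - ∑ i, c i • mapp (kron (σ i) 1) v := by
  ext j
  simp [mapp, kron, Matrix.sum_apply, WithLp.ofLp_sum, smul_sub, smul_smul, Finset.sum_sub_distrib,
    Finset.sum_add_distrib, mul_comm]

theorem kron_one_mul_kron_one (σ τ : Matrix (Fin 2) (Fin 2) ℂ) :
    kron σ (1 : V →L[ℂ] V) * kron τ 1 = kron (σ * τ) 1 := by
  ext j k : 1
  simp [Matrix.mul_apply, kron, smul_smul, add_smul, mul_comm]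

theorem inner_mapp_kron_one (σ : Matrix (Fin 2) (Fin 2) ℂ) (v w : E) :
    ⟪v, mapp (kron σ 1) w⟫_ℂ = ∑ a, ∑ b, σ a b * ⟪v a, w b⟫_ℂ := by
  simp [mapp, kron, PiLp.inner_apply, Fin.sum_univ_two, inner_add_right, inner_smul_right]

theorem inner_mapp_kron_comm {σ : Matrix (Fin 2) (Fin 2) ℂ} (hσ : σ.IsHermitian)
    {T : V →L[ℂ] V} (hT : (T : V →ₗ[ℂ] V).IsSymmetric) (u v : E) :
    ⟪mapp (kron σ T) u, v⟫_ℂ = ⟪u, mapp (kron σ T) v⟫_ℂ := by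
  have hσ' : ∀ j k, starRingEnd ℂ (σ j k) = σ k j := fun j k => hσ.apply k j
  simp only [mapp, kron, PiLp.inner_apply, Matrix.of_apply, sum_inner, inner_sum,
    _root_.smul_apply, inner_smul_left, inner_smul_right, hT.apply_clm, hσ']
  exact Finset.sum_comm

theorem inner_mapp_sum_kron_comm {ι : Type*} (s : Finset ι) {σ : ι → Matrix (Fin 2) (Fin 2) ℂ}
    (hσ : ∀ i, (σ i).IsHermitian) {T : ι → V →L[ℂ] V}
    (hT : ∀ i, (T i : V →ₗ[ℂ] V).IsSymmetric) (u v : E) :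
    ⟪mapp (∑ i ∈ s, kron (σ i) (T i)) u, v⟫_ℂ = ⟪u, mapp (∑ i ∈ s, kron (σ i) (T i)) v⟫_ℂ := by
  simp only [mapp_sum, sum_inner, inner_sum, inner_mapp_kron_comm (hσ _) (hT _)]

theorem hasDerivAt_mapp (M : Matrix (Fin 2) (Fin 2) (V →L[ℂ] V)) {v : ℝ → E} {v' : E} {t : ℝ}
    (hv : HasDerivAt v v' t) : HasDerivAt (fun t => mapp M (v t)) (mapp M v') t := by
  rw [← coe_mappL]
  exact ((mappL M).restrictScalars ℝ).hasFDerivAt.comp_hasDerivAt t hv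

theorem mapp_sum_kron_eq_of_hasDerivAt {ι : Type*} [Fintype ι] (σ : ι → Matrix (Fin 2) (Fin 2) ℂ)
    (X : ι → V →L[ℂ] V) {c : ℝ → ι → ℝ} {c' : ι → ℝ} {v : ℝ → E} {v' : E} {t₀ : ℝ}
    (hc : ∀ i, HasDerivAt (fun t => c t i) (c' i) t₀) (hv : HasDerivAt v v' t₀)
    (hker : ∀ t, mapp (∑ i, kron (σ i) (X i - (c t i : ℂ) • 1)) (v t) = 0) :
    mapp (∑ i, kron (σ i) (X i - (c t₀ i : ℂ) • 1)) v'
      = ∑ i, (c' i : ℂ) • mapp (kron (σ i) 1) (v t₀) := by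
  set A := ∑ i, kron (σ i) (X i)
  have hderiv : HasDerivAt (fun t => mapp A (v t) - ∑ i, (c t i : ℂ) • mapp (kron (σ i) 1) (v t))
      (mapp A v' - ∑ i, ((c t₀ i : ℂ) • mapp (kron (σ i) 1) v'
        + (c' i : ℂ) • mapp (kron (σ i) 1) (v t₀))) t₀ :=
    (hasDerivAt_mapp A hv).sub (HasDerivAt.fun_sum fun i _ =>
      ((hc i).ofReal_comp).smul (hasDerivAt_mapp (kron (σ i) 1) hv))
  have hzero :
      (fun t => mapp A (v t) - ∑ i, (c t i : ℂ) • mapp (kron (σ i) 1) (v t)) = fun _ => 0 := by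
    funext t
    rw [← mapp_kron_sub_smul_one, hker]
  have h := (hzero ▸ hderiv).unique (hasDerivAt_const t₀ 0)
  rw [mapp_kron_sub_smul_one]
  simp only [Finset.sum_add_distrib] at h
  linear_combination (norm := module) h

theorem inner_mapp_kron_pauli_mul (w : E) (i j : Fin 3) :
    ⟪w, mapp (kron (pauli i * pauli j) 1) w⟫_ℂ = (if i = j then ⟪w, w⟫_ℂ else 0)
      + Complex.I * ∑ k, (epsR i j k : ℂ) * ⟪w, mapp (kron (pauli k) 1) w⟫_ℂ := by
  simp only [inner_mapp_kron_one, pauli_mul_pauli]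
  rw [PiLp.inner_apply]
  split_ifs <;> simp [Fin.sum_univ_two, Fin.sum_univ_three, Matrix.one_apply] <;> ring

theorem im_inner_mapp_kron_pauli_mul (w : E) (i j : Fin 3) :
    (⟪w, mapp (kron (pauli i * pauli j) 1) w⟫_ℂ).im
      = ∑ k, epsR i j k * (⟪w, mapp (kron (pauli k) 1) w⟫_ℂ).re := by
  rw [inner_mapp_kron_pauli_mul]
  split_ifs <;> simp [Complex.re_sum, ← Complex.ofReal_pow]

theorem inner_mapp_mul_self_eq_sum {ι : Type*} [Fintype ι] {D : Matrix (Fin 2) (Fin 2) (V →L[ℂ] V)}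
    (hD : ∀ u v : E, ⟪mapp D u, v⟫_ℂ = ⟪u, mapp D v⟫_ℂ) {σ : ι → Matrix (Fin 2) (Fin 2) ℂ}
    (hσ : ∀ i, (σ i).IsHermitian) {p q w : E} {α β : ι → ℝ}
    (hp : mapp D p = ∑ i, (α i : ℂ) • mapp (kron (σ i) 1) w)
    (hq : mapp D q = ∑ j, (β j : ℂ) • mapp (kron (σ j) 1) w) :
    ⟪p, mapp (D * D) q⟫_ℂ = ∑ i, ∑ j, (α i * β j : ℂ) * ⟪w, mapp (kron (σ i * σ j) 1) w⟫_ℂ := by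
  rw [mapp_mul, ← hD, hp, hq, sum_inner]
  refine Finset.sum_congr rfl fun i _ => ?_
  rw [inner_smul_left, inner_sum, Finset.mul_sum]
  refine Finset.sum_congr rfl fun j _ => ?_
  rw [inner_smul_right, inner_mapp_kron_comm (hσ i) LinearMap.IsSymmetric.one, ← mapp_mul,
    kron_one_mul_kron_one, Complex.conj_ofReal]
  ring

theorem im_inner_mapp_mul_self_eq_sum_epsR {D : Matrix (Fin 2) (Fin 2) (V →L[ℂ] V)}
    (hD : ∀ u v : E, ⟪mapp D u, v⟫_ℂ = ⟪u, mapp D v⟫_ℂ) {p q w : E} {α β : Fin 3 → ℝ}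
    (hp : mapp D p = ∑ i, (α i : ℂ) • mapp (kron (pauli i) 1) w)
    (hq : mapp D q = ∑ j, (β j : ℂ) • mapp (kron (pauli j) 1) w) :
    (⟪p, mapp (D * D) q⟫_ℂ).im
      = ∑ i, ∑ j, ∑ k, epsR i j k * (⟪w, mapp (kron (pauli k) 1) w⟫_ℂ).re * α i * β j := by
  simp only [inner_mapp_mul_self_eq_sum hD pauli_isHermitian hp hq, Complex.im_sum,
    ← Complex.ofReal_mul, Complex.im_ofReal_mul, im_inner_mapp_kron_pauli_mul, Finset.mul_sum]
  refine Finset.sum_congr rfl fun i _ => Finset.sum_congr rfl fun j _ =>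
    Finset.sum_congr rfl fun k _ => ?_
  ring

end

theorem sum_epsR_mul_eq_sum_mul_cross (n u v : Fin 3 → ℝ) :
    ∑ i, ∑ j, ∑ k, epsR i j k * n k * u i * v j = ∑ k, n k * cross u v k := by
  simp [Fin.sum_univ_three, epsR, cross]
  ring

theorem dot_cross_eq_sqrt_or_eq_neg_sqrt {u v n : Fin 3 → ℝ} (hu : u ⬝ᵥ u = 1) (hv : v ⬝ᵥ v = 1)
    (huv : u ⬝ᵥ v = 0) {μ : ℝ} (hn : ∀ k, n k = μ * cross u v k) :
    ∑ k, n k * cross u v k = √(∑ k, n k ^ 2) ∨ ∑ k, n k * cross u v k = -√(∑ k, n k ^ 2) := by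
  have hunit : cross u v ⬝ᵥ cross u v = 1 := by
    rw [show cross u v = u ⨯₃ v from rfl, cross_dot_cross, hu, hv, huv, dotProduct_comm, huv]
    ring
  have hdot : ∑ k, n k * cross u v k = μ * (cross u v ⬝ᵥ cross u v) := by
    simp only [hn, dotProduct, Finset.mul_sum, mul_assoc]
  have hsq : ∑ k, n k ^ 2 = μ ^ 2 * (cross u v ⬝ᵥ cross u v) := by
    simp only [hn, dotProduct, Finset.mul_sum, sq]
    ring_nf
  rw [hdot, hsq, hunit, mul_one, mul_one, Real.sqrt_sq_eq_abs]
  rcases abs_choice μ with h | h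
  · exact Or.inl h.symm
  · exact Or.inr (by linarith)

theorem stmt11_general (X : Fin 3 → H →L[ℂ] H) (hX : ∀ i, IsSelfAdjoint (X i))
    (x : (Fin 2 → ℝ) → Fin 3 → ℝ) (Λ : (Fin 2 → ℝ) → PiLp 2 fun _ : Fin 2 => H)
    (s₀ : Fin 2 → ℝ) (dx : Fin 2 → Fin 3 → ℝ) (dΛ : Fin 2 → PiLp 2 fun _ : Fin 2 => H)
    (hx : ∀ a i, HasDerivAt (fun t : ℝ => x (s₀ + t • (Pi.single a 1 : Fin 2 → ℝ)) i) (dx a i) 0)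
    (hΛ : ∀ a, HasDerivAt (fun t : ℝ => Λ (s₀ + t • (Pi.single a 1 : Fin 2 → ℝ))) (dΛ a) 0)
    (hker : ∀ s, mapp (∑ i, kron (pauli i) (X i - (x s i : ℂ) • 1)) (Λ s) = 0) :
    let D : Matrix (Fin 2) (Fin 2) (H →L[ℂ] H) :=
      ∑ i, kron (pauli i) (X i - (x s₀ i : ℂ) • 1)
    let Q : Fin 2 → Fin 2 → ℂ := fun a b => (inner ℂ (dΛ a) (mapp (D * D) (dΛ b)) : ℂ)
    let nvec : Fin 3 → ℝ := fun k => ((inner ℂ (Λ s₀) (mapp (kron (pauli k) 1) (Λ s₀)) : ℂ)).re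
    (∀ a b, (Q a b).im = ∑ i, ∑ j, ∑ k, epsR i j k * nvec k * dx a i * dx b j) ∧
    ((∀ a b, (∑ i, dx a i * dx b i) = if a = b then 1 else 0) →
      ((Q 0 1).im = ∑ k, nvec k * cross (dx 0) (dx 1) k) ∧
      ((∃ μ : ℝ, ∀ k, nvec k = μ * cross (dx 0) (dx 1) k) →
        (Q 0 1).im = Real.sqrt (∑ k, nvec k ^ 2) ∨
          (Q 0 1).im = -Real.sqrt (∑ k, nvec k ^ 2))) := by
  intro D Q nvec
  have hD : ∀ u v : PiLp 2 fun _ : Fin 2 => H, ⟪mapp D u, v⟫_ℂ = ⟪u, mapp D v⟫_ℂ :=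
    inner_mapp_sum_kron_comm _ pauli_isHermitian fun i => by
      simpa using (hX i).isSymmetric.sub (LinearMap.IsSymmetric.one.smul (Complex.conj_ofReal _))
  have hDdΛ : ∀ a, mapp D (dΛ a) = ∑ i, (dx a i : ℂ) • mapp (kron (pauli i) 1) (Λ s₀) := fun a => by
    have h := mapp_sum_kron_eq_of_hasDerivAt pauli X (hx a) (hΛ a) fun t => hker _
    simp only [zero_smul, add_zero] at h
    exact h
  have hS : ∀ a b, (Q a b).im = ∑ i, ∑ j, ∑ k, epsR i j k * nvec k * dx a i * dx b j :=
    fun a b => im_inner_mapp_mul_self_eq_sum_epsR hD (hDdΛ a) (hDdΛ b)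
  refine ⟨hS, fun horth => ?_⟩
  have hS01 : (Q 0 1).im = ∑ k, nvec k * cross (dx 0) (dx 1) k :=
    (hS 0 1).trans (sum_epsR_mul_eq_sum_mul_cross _ _ _)
  exact ⟨hS01, fun ⟨μ, hμ⟩ => hS01 ▸ dot_cross_eq_sqrt_or_eq_neg_sqrt
    ((horth 0 0).trans (if_pos rfl)) ((horth 1 1).trans (if_pos rfl))
    ((horth 0 1).trans (if_neg (by decide))) hμ⟩

/-- The antisymmetric part of the quantum geometric tensor
Q_{ab} = ⟨∂ₐΛ, D² ∂_bΛ⟩ satisfies S_{ab} = Im Q_{ab} = ε_{ijk} n^k ∂ₐxⁱ ∂_bxʲ with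
n^k = ⟨Λ, (σ_k ⊗ id)Λ⟩. If the tangent vectors t₁, t₂ are orthonormal then
S₁₂ = n·(t₁×t₂), and if moreover n is parallel to t₁×t₂ then S₁₂ = ±‖n‖. -/
theorem stmt11 (X : Fin 3 → H →L[ℂ] H) (hX : ∀ i, IsSelfAdjoint (X i))
    (x : (Fin 2 → ℝ) → Fin 3 → ℝ) (Λ : (Fin 2 → ℝ) → PiLp 2 fun _ : Fin 2 => H)
    (s₀ : Fin 2 → ℝ) (dx : Fin 2 → Fin 3 → ℝ) (dΛ : Fin 2 → PiLp 2 fun _ : Fin 2 => H)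
    (hx : ∀ a i, HasDerivAt (fun t : ℝ => x (s₀ + t • (Pi.single a 1 : Fin 2 → ℝ)) i) (dx a i) 0)
    (hΛ : ∀ a, HasDerivAt (fun t : ℝ => Λ (s₀ + t • (Pi.single a 1 : Fin 2 → ℝ))) (dΛ a) 0)
    (hnorm : ∀ s, ‖Λ s‖ = 1)
    (hker : ∀ s, mapp (∑ i, kron (pauli i) (X i - (x s i : ℂ) • 1)) (Λ s) = 0) :
    let D : Matrix (Fin 2) (Fin 2) (H →L[ℂ] H) :=
      ∑ i, kron (pauli i) (X i - (x s₀ i : ℂ) • 1)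
    let Q : Fin 2 → Fin 2 → ℂ := fun a b => (inner ℂ (dΛ a) (mapp (D * D) (dΛ b)) : ℂ)
    let nvec : Fin 3 → ℝ := fun k => ((inner ℂ (Λ s₀) (mapp (kron (pauli k) 1) (Λ s₀)) : ℂ)).re
    (∀ a b, (Q a b).im = ∑ i, ∑ j, ∑ k, epsR i j k * nvec k * dx a i * dx b j) ∧
    ((∀ a b, (∑ i, dx a i * dx b i) = if a = b then 1 else 0) →
      ((Q 0 1).im = ∑ k, nvec k * cross (dx 0) (dx 1) k) ∧
      ((∃ μ : ℝ, ∀ k, nvec k = μ * cross (dx 0) (dx 1) k) →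
        (Q 0 1).im = Real.sqrt (∑ k, nvec k ^ 2) ∨
          (Q 0 1).im = -Real.sqrt (∑ k, nvec k ^ 2))) :=
  stmt11_general X hX x Λ s₀ dx dΛ hx hΛ hker

end
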